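/- arXiv:2307.15082 — 2 statements merged into one kernel-verified Lean document; each statement's English description precedes it below -/
import Mathlib

section
/- The relative error of rounding to nearest is bounded by u/(1+u): for any real x in the normal range of the format, |fl(x) − x| ≤ (u/(1+u))·|x|, and this bound is attained. -/
/-- Radix-2 floating-point numbers with precision `p` (unbounded exponent range,
so every number is "normal": no subnormals or overflow intervene). -/
def FPFormat (p : ℕ) : Set ℝ :=
  {x | ∃ m e : ℤ, |m| < 2 ^ p ∧ x = (m : ℝ) * 2 ^ e}

/-- `fl` is a round-to-nearest function for the format. -/
def IsRoundNearest (p : ℕ) (fl : ℝ → ℝ) : Prop :=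
  ∀ x : ℝ, fl x ∈ FPFormat p ∧ ∀ y ∈ FPFormat p, |x - fl x| ≤ |x - y|

/-!
Let `u = 2^(-p)` and `2^L ≤ |x| < 2^(L+1)`. Rounding `x` to the nearest multiple of the spacing
`δ = 2^(L+1-p)` of the format in that binade gives an error `e` with `e ≤ δ/2 = u·2^L`, and
also `e ≤ |x| - 2^L` since `±2^L` is itself such a multiple. Adding `u` times the second bound
to the first gives `(1+u)·e ≤ u·|x|`. For `x = 1 + u` the nearest format numbers are `1` and
`1 + 2u`, both at distance `u`, so the bound is attained.
-/

section Round

variable {α : Type*} [Field α] [LinearOrder α] [IsStrictOrderedRing α] [FloorRing α]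

lemma abs_sub_round_le_abs_sub_intCast (t : α) {m : ℤ} (hm : (m : α) ≤ |t|) :
    |t - round t| ≤ |t| - m := by
  rcases le_or_gt 0 t with ht | ht
  · calc |t - round t| ≤ |t - m| := round_le t m
      _ = |t| - m := by rw [abs_of_nonneg ht] at hm ⊢; exact abs_of_nonneg (by linarith)
  · calc |t - round t| ≤ |t - ((-m : ℤ) : α)| := round_le t (-m)
      _ = |t| - m := by
        rw [abs_of_neg ht] at hm ⊢; push_cast; rw [abs_of_nonpos (by linarith)]; ring

lemma abs_round_le_of_abs_le {t : α} {N : ℤ} (h : |t| ≤ N) : |round t| ≤ N := by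
  have : ((|round t| : ℤ) : α) < N + 1 := by
    calc ((|round t| : ℤ) : α) = |t - (t - round t)| := by push_cast; ring_nf
      _ ≤ |t| + |t - round t| := abs_sub _ _
      _ ≤ N + 1 / 2 := add_le_add h (abs_sub_round t)
      _ < N + 1 := by linarith
  exact_mod_cast Int.lt_add_one_iff.mp (by exact_mod_cast this)

lemma abs_sub_round_div_mul {δ : α} (hδ : 0 < δ) (x : α) :
    |x - round (x / δ) * δ| = |x / δ - round (x / δ)| * δ := by
  rw [← abs_of_pos hδ, ← abs_mul, abs_of_pos hδ, sub_mul, div_mul_cancel₀ x hδ.ne']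

lemma abs_sub_round_div_mul_le_half {δ : α} (hδ : 0 < δ) (x : α) :
    |x - round (x / δ) * δ| ≤ δ / 2 := by
  rw [abs_sub_round_div_mul hδ]
  linarith [mul_le_mul_of_nonneg_right (abs_sub_round (x / δ)) hδ.le]

lemma abs_sub_round_div_mul_le_abs_sub {δ : α} (hδ : 0 < δ) {x : α} {m : ℤ}
    (hm : m * δ ≤ |x|) :
    |x - round (x / δ) * δ| ≤ |x| - m * δ := by
  have hm' : (m : α) ≤ |x / δ| := by rwa [abs_div, abs_of_pos hδ, le_div_iff₀ hδ]
  calc |x - round (x / δ) * δ| ≤ (|x / δ| - m) * δ := by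
        rw [abs_sub_round_div_mul hδ]; gcongr; exact abs_sub_round_le_abs_sub_intCast _ hm'
    _ = |x| - m * δ := by rw [sub_mul, abs_div, abs_of_pos hδ, div_mul_cancel₀ _ hδ.ne']

end Round

lemma le_div_one_add_mul_of_le_of_le {e u a s : ℝ} (hu : 0 ≤ u) (hea : e ≤ u * a)
    (hes : e ≤ s - a) : e ≤ u / (1 + u) * s := by
  rw [div_mul_eq_mul_div, le_div_iff₀ (by linarith)]
  nlinarith

namespace FPFormat

lemma intCast_mul_zpow_mem {p : ℕ} (hp : 1 ≤ p) {k : ℤ} (hk : |k| ≤ 2 ^ p) (e : ℤ) :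
    (k : ℝ) * 2 ^ e ∈ FPFormat p := by
  rcases hk.lt_or_eq with hk | hk
  · exact ⟨k, e, hk, rfl⟩
  obtain ⟨j, rfl⟩ : (2 : ℤ) ∣ k := by
    rw [← dvd_abs, hk]; exact dvd_pow_self 2 (by omega)
  refine ⟨j, e + 1, ?_, ?_⟩
  · rw [abs_mul, abs_two] at hk
    linarith [pow_pos (two_pos : (0 : ℤ) < 2) p]
  · push_cast; rw [zpow_add_one₀ two_ne_zero]; ring

lemma exists_eq_intCast_mul_zpow {p : ℕ} {y : ℝ} (hy : y ∈ FPFormat p) {E : ℤ}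
    (hE : 2 ^ E ≤ |y|) : ∃ n : ℤ, y = n * 2 ^ (E + 1 - p) := by
  obtain ⟨m, e, hm, rfl⟩ := hy
  have hEe : E < e + p := by
    have hm' : |(m : ℝ)| < 2 ^ (p : ℤ) := by rw [zpow_natCast]; exact_mod_cast hm
    have : |(m : ℝ) * 2 ^ e| < 2 ^ (e + p) := by
      rw [abs_mul, abs_of_pos (zpow_pos two_pos e : (0 : ℝ) < 2 ^ e), zpow_add₀ two_ne_zero,
        mul_comm (_ ^ e)]
      exact mul_lt_mul_of_pos_right hm' (zpow_pos two_pos e)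
    exact (zpow_lt_zpow_iff_right₀ one_lt_two).1 (hE.trans_lt this)
  refine ⟨m * 2 ^ (e - (E + 1 - p)).toNat, ?_⟩
  push_cast
  rw [← zpow_natCast, Int.toNat_of_nonneg (by omega), mul_assoc, ← zpow_add₀ two_ne_zero]
  ring_nf

lemma exists_abs_sub_le {p : ℕ} (hp : 1 ≤ p) {u : ℝ} (hu : u = 2 ^ (-(p : ℤ))) (x : ℝ) :
    ∃ y ∈ FPFormat p, |x - y| ≤ u / (1 + u) * |x| := by
  rcases eq_or_ne x 0 with rfl | hx
  · exact ⟨0, by simpa using intCast_mul_zpow_mem hp (k := 0) (by positivity) 0, by simp⟩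
  set L := Int.log 2 |x|
  set a : ℝ := 2 ^ L
  set δ : ℝ := 2 ^ (L + 1 - p) with hδ_def
  have hu_mul : u * 2 ^ p = 1 := by
    rw [hu, zpow_neg, zpow_natCast, inv_mul_cancel₀ (by positivity)]
  have hδ : δ = 2 * u * a := by
    rw [hδ_def, hu, show L + 1 - p = 1 + -(p : ℤ) + L by ring, zpow_add₀ two_ne_zero,
      zpow_add₀ two_ne_zero, zpow_one]
  have hδ0 : 0 < δ := by positivity
  have ha : ((2 ^ (p - 1) : ℤ) : ℝ) * δ = a := by
    rw [← pow_sub_one_mul (by omega : p ≠ 0) (2 : ℝ)] at hu_mul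
    push_cast; rw [hδ]; linear_combination a * hu_mul
  have h2a : ((2 ^ p : ℤ) : ℝ) * δ = 2 * a := by
    push_cast; rw [hδ]; linear_combination 2 * a * hu_mul
  have hx_ge : a ≤ |x| := by
    simpa using Int.zpow_log_le_self (b := 2) (by norm_num) (abs_pos.2 hx)
  have hx_lt : |x| < 2 * a := by
    simpa [zpow_add_one₀, mul_comm] using Int.lt_zpow_succ_log_self (b := 2) (by norm_num) |x|
  have hxδ : |x / δ| ≤ ((2 ^ p : ℤ) : ℝ) := by
    rw [abs_div, abs_of_pos hδ0, div_le_iff₀ hδ0, h2a]; exact hx_lt.le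
  refine ⟨round (x / δ) * δ, intCast_mul_zpow_mem hp (abs_round_le_of_abs_le hxδ) _, ?_⟩
  apply le_div_one_add_mul_of_le_of_le (by rw [hu]; positivity) (a := a)
  · calc _ ≤ δ / 2 := abs_sub_round_div_mul_le_half hδ0 x
      _ = u * a := by rw [hδ]; ring
  · rw [← ha]; exact abs_sub_round_div_mul_le_abs_sub hδ0 (ha.trans_le hx_ge)

lemma le_abs_one_add_sub {p : ℕ} (hp : 1 ≤ p) {u : ℝ} (hu : u = 2 ^ (-(p : ℤ))) {y : ℝ}
    (hy : y ∈ FPFormat p) : u ≤ |1 + u - y| := by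
  by_contra! h
  rw [abs_sub_lt_iff] at h
  obtain ⟨n, rfl⟩ := exists_eq_intCast_mul_zpow hy (E := 0) (by
    rw [zpow_zero]; exact le_abs.2 (Or.inl (by linarith)))
  set q : ℝ := 2 ^ (0 + 1 - p : ℤ) with hq_def
  have hq : q = 2 * u := by
    rw [hq_def, hu, show (0 + 1 - p : ℤ) = 1 + -(p : ℤ) by ring, zpow_add₀ two_ne_zero,
      zpow_one]
  have hq0 : 0 ≤ q := by positivity
  have hN : (2 : ℝ) ^ (p - 1) * q = 1 := by
    rw [hq, hu, zpow_neg, zpow_natCast, ← pow_sub_one_mul (by omega : p ≠ 0)]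
    field_simp
  -- `1` and `1 + 2u` are consecutive multiples of `q = 2u`, and `y = n q` lies strictly between.
  have hlo : (2 : ℝ) ^ (p - 1) < n := lt_of_mul_lt_mul_right (by linarith) hq0
  have hhi : (n : ℝ) < 2 ^ (p - 1) + 1 := lt_of_mul_lt_mul_right (by linarith) hq0
  have hlo' : (2 : ℤ) ^ (p - 1) < n := by exact_mod_cast hlo
  have hhi' : n < (2 : ℤ) ^ (p - 1) + 1 := by exact_mod_cast hhi
  omega

end FPFormat

/-- The relative error of round-to-nearest is bounded by `u/(1+u)` where
`u = 2^(-p)`, and this bound is attained. -/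
theorem round_nearest_relative_error (p : ℕ) (hp : 1 ≤ p) (u : ℝ)
    (hu : u = 2 ^ (-(p : ℤ))) (fl : ℝ → ℝ) (hfl : IsRoundNearest p fl) :
    (∀ x : ℝ, |fl x - x| ≤ (u / (1 + u)) * |x|) ∧
    (∃ x : ℝ, x ≠ 0 ∧ |fl x - x| = (u / (1 + u)) * |x|) := by
  have hu0 : 0 < u := by rw [hu]; positivity
  refine ⟨fun x => ?_, 1 + u, by positivity, ?_⟩
  · obtain ⟨y, hy, hxy⟩ := FPFormat.exists_abs_sub_le hp hu x
    rw [abs_sub_comm]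
    exact ((hfl x).2 y hy).trans hxy
  · have hone : (1 : ℝ) ∈ FPFormat p := by
      simpa using FPFormat.intCast_mul_zpow_mem hp (k := 1)
        (by rw [abs_one]; exact one_le_pow₀ one_le_two) 0
    have hle : |1 + u - fl (1 + u)| ≤ u := by
      simpa [abs_of_pos hu0] using (hfl (1 + u)).2 1 hone
    have hge := FPFormat.le_abs_one_add_sub hp hu (hfl (1 + u)).1
    rw [abs_sub_comm, le_antisymm hle hge, abs_of_pos (by positivity),
      div_mul_cancel₀ _ (by positivity)]
end

section
/- Error-free transformation for addition (Fast2Sum): if a and b are floating-point numbers with |a| ≥ |b|, and s = fl(a+b), t = fl(b − fl(s − a)), then s + t = a + b exactly, i.e., t is exactly the rounding error of the floating-point addition. -/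
/-!
On a grid `2 ^ e ℤ` the format contains every point of absolute value below `(2 ^ p + 1) * 2 ^ e`,
and rounding maps the grid into itself. Since `|b| ≤ |a|`, both `a` and `b` lie on a grid
`2 ^ e ℤ` with `|b| < 2 ^ p * 2 ^ e`. As `a` competes with `s = fl (a + b)`, the error `a + b - s`
is a grid point with `|a + b - s| ≤ |b|`, hence representable. Then `s - a = b - (a + b - s)` is
representable too: if the error is at most `2 ^ e` then `|s - a| < (2 ^ p + 1) * 2 ^ e`; if it is
larger, `s` and `a` both lie on the coarser grid `2 ^ (e + 1) ℤ`, on which `|s - a| ≤ 2 |b|` is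
small enough. So `z = s - a` and `t = fl (a + b - s) = a + b - s` are computed exactly.
-/

noncomputable def dyadicGrid (e : ℤ) : AddSubgroup ℝ := AddSubgroup.zmultiples (2 ^ e)

theorem abs_mul_two_zpow (x : ℝ) (e : ℤ) : |x * 2 ^ e| = |x| * 2 ^ e := by
  rw [abs_mul, abs_of_pos (zpow_pos (two_pos : (0 : ℝ) < 2) e)]

theorem mem_dyadicGrid {x : ℝ} {e : ℤ} : x ∈ dyadicGrid e ↔ ∃ k : ℤ, x = k * 2 ^ e := by
  simp only [dyadicGrid, AddSubgroup.mem_zmultiples_iff, zsmul_eq_mul, eq_comm]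

theorem dyadicGrid_antitone : Antitone dyadicGrid := by
  intro e e' h
  rw [dyadicGrid, AddSubgroup.zmultiples_le, mem_dyadicGrid]
  refine ⟨2 ^ (e' - e).toNat, ?_⟩
  rw [Int.cast_pow, Int.cast_ofNat, ← zpow_natCast, Int.toNat_of_nonneg (by omega),
    ← zpow_add₀ two_ne_zero, sub_add_cancel]

theorem eq_zero_of_mem_dyadicGrid {y : ℝ} {e : ℤ} (hy : y ∈ dyadicGrid e) (h : |y| < 2 ^ e) :
    y = 0 := by
  obtain ⟨k, rfl⟩ := mem_dyadicGrid.1 hy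
  have hk : |(k : ℝ)| < 1 := by
    rw [abs_mul_two_zpow] at h
    exact (mul_lt_iff_lt_one_left (zpow_pos two_pos e)).1 h
  rw [Int.abs_lt_one_iff.1 (by exact_mod_cast hk : |k| < 1), Int.cast_zero, zero_mul]

theorem exists_mem_dyadicGrid_two_mul_abs_sub_le (x : ℝ) (e : ℤ) :
    ∃ y ∈ dyadicGrid e, 2 * |x - y| ≤ 2 ^ e := by
  have he : (0 : ℝ) < 2 ^ e := zpow_pos two_pos e
  refine ⟨round (x / 2 ^ e) * 2 ^ e, mem_dyadicGrid.2 ⟨_, rfl⟩, ?_⟩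
  have hround := abs_sub_round (x / 2 ^ e)
  calc 2 * |x - round (x / 2 ^ e) * 2 ^ e| = 2 * |x / 2 ^ e - round (x / 2 ^ e)| * 2 ^ e := by
        rw [mul_assoc, ← abs_mul_two_zpow, sub_mul, div_mul_cancel₀ _ he.ne']
    _ ≤ 2 ^ e := by nlinarith

namespace FPFormat

variable {p : ℕ}

theorem mem_iff {x : ℝ} : x ∈ FPFormat p ↔ ∃ e : ℤ, x ∈ dyadicGrid e ∧ |x| < 2 ^ p * 2 ^ e := by
  simp only [FPFormat, Set.mem_ofPred_eq, mem_dyadicGrid]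
  constructor
  · rintro ⟨m, e, hm, rfl⟩
    refine ⟨e, ⟨m, rfl⟩, ?_⟩
    rw [abs_mul_two_zpow]
    exact mul_lt_mul_of_pos_right (by exact_mod_cast hm) (zpow_pos two_pos e)
  · rintro ⟨e, ⟨m, rfl⟩, h⟩
    rw [abs_mul_two_zpow] at h
    exact ⟨m, e, by exact_mod_cast lt_of_mul_lt_mul_right h (zpow_pos two_pos e).le, rfl⟩

theorem mem_of_abs_lt_two_pow_add_one_mul (hp : 1 ≤ p) {y : ℝ} {e : ℤ} (hy : y ∈ dyadicGrid e)
    (h : |y| < (2 ^ p + 1) * 2 ^ e) : y ∈ FPFormat p := by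
  obtain ⟨k, rfl⟩ := mem_dyadicGrid.1 hy
  have he : (0 : ℝ) < 2 ^ e := zpow_pos two_pos e
  rw [abs_mul_two_zpow] at h
  have hk : |k| ≤ 2 ^ p := by
    have : |(k : ℝ)| < 2 ^ p + 1 := lt_of_mul_lt_mul_right h he.le
    have : |k| < 2 ^ p + 1 := by exact_mod_cast this
    omega
  rcases hk.lt_or_eq with hk | hk
  · exact ⟨k, e, hk, rfl⟩
  -- `k = ± 2 ^ p` is even, so `k * 2 ^ e` also lies on the coarser grid `2 ^ (e + 1) ℤ`
  have hk2 : 2 * (k / 2) = k :=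
    Int.mul_ediv_cancel' ((dvd_abs 2 k).1 (hk ▸ dvd_pow_self 2 (by omega)))
  refine mem_iff.2 ⟨e + 1, mem_dyadicGrid.2 ⟨k / 2, ?_⟩, ?_⟩
  · rw [zpow_add_one₀ two_ne_zero]
    nth_rewrite 1 [← hk2]
    push_cast
    ring
  · rw [abs_mul_two_zpow, zpow_add_one₀ two_ne_zero, ← Int.cast_abs, hk]
    push_cast
    nlinarith [pow_pos (two_pos : (0 : ℝ) < 2) p]

theorem exists_le_mem_dyadicGrid_of_abs_le {a b : ℝ} {ea : ℤ}
    (ha_bound : |a| < 2 ^ p * 2 ^ ea) (hb : b ∈ FPFormat p) (hab : |b| ≤ |a|) :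
    ∃ e ≤ ea, b ∈ dyadicGrid e ∧ |b| < 2 ^ p * 2 ^ e := by
  obtain ⟨eb, hb_grid, hb_bound⟩ := mem_iff.1 hb
  rcases le_or_gt eb ea with h | h
  · exact ⟨eb, h, hb_grid, hb_bound⟩
  · exact ⟨ea, le_rfl, dyadicGrid_antitone h.le hb_grid, hab.trans_lt ha_bound⟩

end FPFormat

namespace IsRoundNearest

variable {p : ℕ} {fl : ℝ → ℝ}

theorem apply_eq_self (hfl : IsRoundNearest p fl) {x : ℝ} (hx : x ∈ FPFormat p) : fl x = x := by
  have h := (hfl x).2 x hx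
  rw [sub_self, abs_zero, abs_nonpos_iff, sub_eq_zero] at h
  exact h.symm

theorem abs_add_sub_apply_add_le (hfl : IsRoundNearest p fl) {a : ℝ} (ha : a ∈ FPFormat p)
    (b : ℝ) : |a + b - fl (a + b)| ≤ |b| := by
  simpa using (hfl (a + b)).2 a ha

theorem two_mul_abs_sub_apply_le_of_abs_le (hp : 1 ≤ p) (hfl : IsRoundNearest p fl) {x : ℝ}
    {e : ℤ} (hx : |x| ≤ 2 ^ p * 2 ^ e) : 2 * |x - fl x| ≤ 2 ^ e := by
  obtain ⟨y, hy, hxy⟩ := exists_mem_dyadicGrid_two_mul_abs_sub_le x e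
  have hyf : y ∈ FPFormat p := by
    refine FPFormat.mem_of_abs_lt_two_pow_add_one_mul hp hy ?_
    calc |y| ≤ |x| + |x - y| := by simpa using abs_sub x (x - y)
    _ < (2 ^ p + 1) * 2 ^ e := by nlinarith [zpow_pos (two_pos : (0 : ℝ) < 2) e]
  linarith [(hfl x).2 y hyf]

theorem two_mul_abs_sub_apply_le_of_mem_dyadicGrid (hp : 1 ≤ p) (hfl : IsRoundNearest p fl)
    {x : ℝ} {e : ℤ} (hgrid : fl x ∈ dyadicGrid e) (hbound : |fl x| < 2 ^ p * 2 ^ e) :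
    2 * |x - fl x| ≤ 2 ^ e := by
  have hneighbour (y : ℝ) (hy : y = 2 ^ e ∨ y = -2 ^ e) : |x - fl x| ≤ |x - fl x - y| := by
    have hy_grid : y ∈ dyadicGrid e := by
      rcases hy with rfl | rfl
      exacts [AddSubgroup.mem_zmultiples _, neg_mem (AddSubgroup.mem_zmultiples _)]
    have hy_abs : |y| = 2 ^ e := by rcases hy with rfl | rfl <;> simp
    rw [sub_sub]
    refine (hfl x).2 _ (FPFormat.mem_of_abs_lt_two_pow_add_one_mul hp (add_mem hgrid hy_grid) ?_)
    linarith [abs_add_le (fl x) y]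
  have h₁ := hneighbour _ (.inl rfl)
  have h₂ := hneighbour _ (.inr rfl)
  have he : (0 : ℝ) < 2 ^ e := zpow_pos two_pos e
  cases abs_cases (x - fl x) <;> cases abs_cases (x - fl x - 2 ^ e) <;>
    cases abs_cases (x - fl x - -2 ^ e) <;> linarith

theorem apply_mem_dyadicGrid (hp : 1 ≤ p) (hfl : IsRoundNearest p fl) {x : ℝ} {e : ℤ}
    (hx : x ∈ dyadicGrid e) : fl x ∈ dyadicGrid e := by
  obtain ⟨E, hE, hbound⟩ := FPFormat.mem_iff.1 (hfl x).1
  rcases le_or_gt e E with heE | hEe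
  · exact dyadicGrid_antitone heE hE
  have herr := hfl.two_mul_abs_sub_apply_le_of_mem_dyadicGrid hp hE hbound
  have hzero : x - fl x = 0 := eq_zero_of_mem_dyadicGrid
    (sub_mem (dyadicGrid_antitone hEe.le hx) hE) (by linarith [zpow_pos (two_pos : (0 : ℝ) < 2) E])
  rwa [← sub_eq_zero.1 hzero]

theorem apply_mem_dyadicGrid_add_one (hp : 1 ≤ p) (hfl : IsRoundNearest p fl) {x : ℝ} {e : ℤ}
    (h : 2 ^ e < |x - fl x|) : fl x ∈ dyadicGrid (e + 1) := by
  obtain ⟨E, hE, hbound⟩ := FPFormat.mem_iff.1 (hfl x).1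
  rcases le_or_gt (e + 1) E with heE | hEe
  · exact dyadicGrid_antitone heE hE
  have herr := hfl.two_mul_abs_sub_apply_le_of_mem_dyadicGrid hp hE hbound
  have : (2 : ℝ) ^ E ≤ 2 ^ e := zpow_le_zpow_right₀ one_le_two (by omega)
  linarith [zpow_pos (two_pos : (0 : ℝ) < 2) e]

theorem add_sub_apply_add_mem (hp : 1 ≤ p) (hfl : IsRoundNearest p fl) {a b : ℝ} {e : ℤ}
    (ha : a ∈ FPFormat p) (ha_grid : a ∈ dyadicGrid e) (hb_grid : b ∈ dyadicGrid e)
    (hb_bound : |b| < 2 ^ p * 2 ^ e) : a + b - fl (a + b) ∈ FPFormat p := by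
  have hx : a + b ∈ dyadicGrid e := add_mem ha_grid hb_grid
  exact FPFormat.mem_iff.2 ⟨e, sub_mem hx (hfl.apply_mem_dyadicGrid hp hx),
    (hfl.abs_add_sub_apply_add_le ha b).trans_lt hb_bound⟩

theorem apply_add_sub_mem (hp : 1 ≤ p) (hfl : IsRoundNearest p fl) {a b : ℝ} {e ea : ℤ}
    (ha_grid : a ∈ dyadicGrid ea) (ha_bound : |a| < 2 ^ p * 2 ^ ea) (hea : e ≤ ea)
    (hb_grid : b ∈ dyadicGrid e) (hb_bound : |b| < 2 ^ p * 2 ^ e) :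
    fl (a + b) - a ∈ FPFormat p := by
  set s := fl (a + b)
  have ha_grid_e : a ∈ dyadicGrid e := dyadicGrid_antitone hea ha_grid
  have ha : a ∈ FPFormat p := FPFormat.mem_iff.2 ⟨ea, ha_grid, ha_bound⟩
  have herr : |a + b - s| ≤ |b| := hfl.abs_add_sub_apply_add_le ha b
  have hsa : |s - a| ≤ |b| + |a + b - s| := by
    simpa only [show s - a = b - (a + b - s) by ring] using abs_sub b (a + b - s)
  rcases le_or_gt |a + b - s| (2 ^ e) with hsmall | hlarge
  · have hs_grid : s ∈ dyadicGrid e := hfl.apply_mem_dyadicGrid hp (add_mem ha_grid_e hb_grid)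
    exact FPFormat.mem_of_abs_lt_two_pow_add_one_mul hp (sub_mem hs_grid ha_grid_e) (by linarith)
  -- a large rounding error forces both `s` and `a` onto the coarser grid `2 ^ (e + 1) ℤ`
  have hs_grid : s ∈ dyadicGrid (e + 1) := hfl.apply_mem_dyadicGrid_add_one hp hlarge
  have ha_grid' : a ∈ dyadicGrid (e + 1) := by
    rcases hea.lt_or_eq with hea | rfl
    · exact dyadicGrid_antitone hea ha_grid
    -- otherwise `|a + b| ≤ 2 ^ (p + 1) * 2 ^ e` would bound the rounding error by `2 ^ e`
    have hx : |a + b| ≤ 2 ^ p * 2 ^ (e + 1) := by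
      rw [zpow_add_one₀ two_ne_zero]
      linarith [abs_add_le a b]
    have := hfl.two_mul_abs_sub_apply_le_of_abs_le hp hx
    rw [zpow_add_one₀ two_ne_zero] at this
    linarith
  refine FPFormat.mem_iff.2 ⟨e + 1, sub_mem hs_grid ha_grid', ?_⟩
  rw [zpow_add_one₀ two_ne_zero]
  linarith

end IsRoundNearest

/-- Fast2Sum: if `|b| ≤ |a|`, `s = fl(a+b)`, `z = fl(s-a)`, `t = fl(b-z)`,
then `s + t = a + b` exactly: `t` is exactly the rounding error of the addition. -/
theorem fast2sum (p : ℕ) (hp : 1 ≤ p) (fl : ℝ → ℝ) (hfl : IsRoundNearest p fl)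
    (a b s z t : ℝ) (ha : a ∈ FPFormat p) (hb : b ∈ FPFormat p)
    (hab : |b| ≤ |a|)
    (hs : s = fl (a + b)) (hz : z = fl (s - a)) (ht : t = fl (b - z)) :
    s + t = a + b := by
  obtain ⟨ea, ha_grid, ha_bound⟩ := FPFormat.mem_iff.1 ha
  obtain ⟨e, hea, hb_grid, hb_bound⟩ := FPFormat.exists_le_mem_dyadicGrid_of_abs_le ha_bound hb hab
  have hz_exact : z = s - a := by
    rw [hz, hs, hfl.apply_eq_self (hfl.apply_add_sub_mem hp ha_grid ha_bound hea hb_grid hb_bound)]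
  have ht_exact : t = a + b - s := by
    rw [ht, hz_exact, show b - (s - a) = a + b - s by ring, hs, hfl.apply_eq_self
      (hfl.add_sub_apply_add_mem hp ha (dyadicGrid_antitone hea ha_grid) hb_grid hb_bound)]
  rw [ht_exact]
  ring
end
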